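/- If i and j are indices with τ(i,j) ≤ π/2, then the diameter of the point set {v_i, v_{i+1}, …, v_j} is attained by the pair (v_i, v_j); that is, for all k, l ∈ ⟨i..j⟩, dist(v_k, v_l) ≤ dist(v_i, v_j). -/

import Mathlib

noncomputable section

namespace BNC

/-- The Euclidean plane. -/
abbrev Pt : Type := EuclideanSpace ℝ (Fin 2)

/-- Planar cross product (determinant) of two vectors. -/
def cross (u w : Pt) : ℝ := u 0 * w 1 - u 1 * w 0

/-- `v` lists points in strictly convex position in counterclockwise order:
every point distinct from `v i` and `v (i+1)` lies strictly to the left of the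
directed line from `v i` to `v (i+1)`.  (This also forces no three of the
points to be collinear.) -/
def ConvexCCW {n : ℕ} (v : ZMod n → Pt) : Prop :=
  ∀ i j : ZMod n, j ≠ i → j ≠ i + 1 → 0 < cross (v (i + 1) - v i) (v j - v i)

/-- The cyclic arc of indices `i, i+1, …, j` (mod `n`). -/
def arc {n : ℕ} (i j : ZMod n) : Finset (ZMod n) :=
  Finset.image (fun t : ℕ => i + (t : ZMod n)) (Finset.range ((j - i).val + 1))

/-- The turning angle `τ(i,j)`: the sum over `k ∈ ⟨i+1..j−1⟩` of the unsigned
angle between `v (k+1) − v k` and `v k − v (k−1)`. -/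
def tau {n : ℕ} (v : ZMod n → Pt) (i j : ZMod n) : ℝ :=
  ∑ k ∈ arc (i + 1) (j - 1),
    InnerProductGeometry.angle (v (k + 1) - v k) (v k - v (k - 1))

/-- The length of the segment joining the two points of an unordered pair. -/
def pairDist {n : ℕ} (v : ZMod n → Pt) : Sym2 (ZMod n) → ℝ :=
  Sym2.lift ⟨fun a b => dist (v a) (v b), fun a b => dist_comm (v a) (v b)⟩

/-- The closed segment joining the two points of an unordered pair. -/
def pairSeg {n : ℕ} (v : ZMod n → Pt) : Sym2 (ZMod n) → Set Pt :=
  Sym2.lift ⟨fun a b => segment ℝ (v a) (v b), fun a b => segment_symm ℝ (v a) (v b)⟩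

/-- `M` is a perfect matching of the index set `A`: a set of non-degenerate
unordered pairs of indices from `A` such that every index of `A` belongs to
exactly one pair. -/
def IsMatchingOn {n : ℕ} (A : Set (ZMod n)) (M : Set (Sym2 (ZMod n))) : Prop :=
  (∀ e ∈ M, ¬ e.IsDiag) ∧ (∀ e ∈ M, ∀ k, k ∈ e → k ∈ A) ∧
    (∀ k ∈ A, ∃! e, e ∈ M ∧ k ∈ e)

/-- The closed segments of distinct pairs of `M` are pairwise disjoint. -/
def NonCrossing {n : ℕ} (v : ZMod n → Pt) (M : Set (Sym2 (ZMod n))) : Prop :=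
  ∀ e ∈ M, ∀ e' ∈ M, e ≠ e' → Disjoint (pairSeg v e) (pairSeg v e')

/-- The bottleneck value of a matching: the maximal segment length. -/
def bnM {n : ℕ} (v : ZMod n → Pt) (M : Set (Sym2 (ZMod n))) : ℝ :=
  sSup (pairDist v '' M)

/-- A non-crossing perfect matching of the whole point set. -/
def IsNCMatching {n : ℕ} (v : ZMod n → Pt) (M : Set (Sym2 (ZMod n))) : Prop :=
  IsMatchingOn Set.univ M ∧ NonCrossing v M

/-- A bottleneck matching: a non-crossing matching minimizing the bottleneck value. -/
def IsBottleneck {n : ℕ} (v : ZMod n → Pt) (M : Set (Sym2 (ZMod n))) : Prop :=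
  IsNCMatching v M ∧ ∀ M', IsNCMatching v M' → bnM v M ≤ bnM v M'

/-- A pair is an edge of the full polygon iff it is of the form `{k, k+1}`. -/
def IsPolyEdge {n : ℕ} (e : Sym2 (ZMod n)) : Prop := ∃ k : ZMod n, e = s(k, k + 1)

/-- The diagonals of a matching of the full point set. -/
def fullDiags {n : ℕ} (M : Set (Sym2 (ZMod n))) : Set (Sym2 (ZMod n)) :=
  {e ∈ M | ¬ IsPolyEdge e}

/-- The full polygon: the convex hull of all the points. -/
def fullPoly {n : ℕ} (v : ZMod n → Pt) : Set Pt := convexHull ℝ (Set.range v)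

/-- The interior of the polygon `Poly` minus the union of the segments of the
diagonals from `D`. -/
def regionSpace {n : ℕ} (v : ZMod n → Pt) (Poly : Set Pt) (D : Set (Sym2 (ZMod n))) :
    Set Pt :=
  interior Poly \ ⋃ e ∈ D, pairSeg v e

/-- `R` is a region: the closure of a connected component of the interior of the
polygon minus the union of the diagonal segments. -/
def IsRegion {n : ℕ} (v : ZMod n → Pt) (Poly : Set Pt) (D : Set (Sym2 (ZMod n)))
    (R : Set Pt) : Prop :=
  ∃ x ∈ regionSpace v Poly D, R = closure (connectedComponentIn (regionSpace v Poly D) x)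

/-- The diagonals from `D` whose segment lies on the boundary of `R`. -/
def boundDiags {n : ℕ} (v : ZMod n → Pt) (Poly : Set Pt) (D : Set (Sym2 (ZMod n)))
    (R : Set Pt) : Set (Sym2 (ZMod n)) :=
  {e ∈ D | pairSeg v e ⊆ frontier R}

/-- `R` is a region bounded by exactly `k` diagonals. -/
def KBounded {n : ℕ} (v : ZMod n → Pt) (Poly : Set Pt) (D : Set (Sym2 (ZMod n)))
    (R : Set Pt) (k : ℕ) : Prop :=
  IsRegion v Poly D R ∧ (boundDiags v Poly D R).ncard = k

/-- The graph whose vertices are the diagonals of `D`, two being adjacent iff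
some 2-bounded region has both on its boundary. -/
def cascadeGraph {n : ℕ} (v : ZMod n → Pt) (Poly : Set Pt) (D : Set (Sym2 (ZMod n))) :
    SimpleGraph D where
  Adj a b := a ≠ b ∧ ∃ R : Set Pt, KBounded v Poly D R 2 ∧
      pairSeg v a.1 ⊆ frontier R ∧ pairSeg v b.1 ⊆ frontier R
  symm := by
    refine ⟨?_⟩
    rintro a b ⟨hab, R, h1, h2, h3⟩
    exact ⟨hab.symm, R, h1, h3, h2⟩
  loopless := by refine ⟨?_⟩; rintro a ⟨h, -⟩; exact h rfl

/-- The number of cascades: the number of connected components of the cascade graph. -/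
def cascadeCount {n : ℕ} (v : ZMod n → Pt) (Poly : Set Pt) (D : Set (Sym2 (ZMod n))) : ℕ :=
  Nat.card (cascadeGraph v Poly D).ConnectedComponent

/-- A pair is a diagonal relative to the arc `⟨i..j⟩` iff it is neither `{i,j}`
nor of the form `{k, k+1}` with both `k` and `k+1` in the arc. -/
def ArcDiag {n : ℕ} (i j : ZMod n) (e : Sym2 (ZMod n)) : Prop :=
  e ≠ s(i, j) ∧ ∀ k : ZMod n, k ∈ arc i j → k + 1 ∈ arc i j → e ≠ s(k, k + 1)

/-- The convex hull of the points of the arc `⟨i..j⟩`. -/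
def arcPoly {n : ℕ} (v : ZMod n → Pt) (i j : ZMod n) : Set Pt :=
  convexHull ℝ (v '' (arc i j : Set (ZMod n)))

/-- The diagonals (relative to the arc `⟨i..j⟩`) of a matching `M`. -/
def arcDiags {n : ℕ} (i j : ZMod n) (M : Set (Sym2 (ZMod n))) : Set (Sym2 (ZMod n)) :=
  {e ∈ M | ArcDiag i j e}

/-- `M` is admissible for the subproblem `Matching(i,j)`: it is a non-crossing
perfect matching of the points of the arc `⟨i..j⟩`, it has at most one cascade,
and any region whose boundary contains the segment `[v i, v j]` has at most one
diagonal of `M` on its boundary. -/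
def Admissible {n : ℕ} (v : ZMod n → Pt) (i j : ZMod n) (M : Set (Sym2 (ZMod n))) : Prop :=
  IsMatchingOn (↑(arc i j)) M ∧ NonCrossing v M ∧
    cascadeCount v (arcPoly v i j) (arcDiags i j M) ≤ 1 ∧
    ∀ R : Set Pt, IsRegion v (arcPoly v i j) (arcDiags i j M) R →
      segment ℝ (v i) (v j) ⊆ frontier R →
      (boundDiags v (arcPoly v i j) (arcDiags i j M) R).ncard ≤ 1

/-- `S i j`: the optimal value of the subproblem `Matching(i,j)`. -/
def S {n : ℕ} (v : ZMod n → Pt) (i j : ZMod n) : ℝ :=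
  sInf (bnM v '' {M | Admissible v i j M})

/-- The pair `(i,j)` is necessary: every admissible matching attaining `S i j`
contains the pair `{i,j}`. -/
def Necessary {n : ℕ} (v : ZMod n → Pt) (i j : ZMod n) : Prop :=
  ∀ M : Set (Sym2 (ZMod n)), Admissible v i j M → bnM v M = S v i j → s(i, j) ∈ M

/-- The closed right side of the directed line from `v i` to `v j`. -/
def rightClosed {n : ℕ} (v : ZMod n → Pt) (i j : ZMod n) : Set Pt :=
  {P : Pt | cross (v j - v i) (P - v i) ≤ 0}

/-- The region `Π⁺(i,j)`. -/
def PiPlus {n : ℕ} (v : ZMod n → Pt) (i j : ZMod n) : Set Pt :=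
  {P ∈ rightClosed v i j |
    Real.pi / 3 ≤ EuclideanGeometry.angle (v i) P (v j) ∧ dist (v i) (v j) ≤ dist P (v i)}

/-- The region `Π⁻(i,j)`. -/
def PiMinus {n : ℕ} (v : ZMod n → Pt) (i j : ZMod n) : Set Pt :=
  {P ∈ rightClosed v i j |
    Real.pi / 3 ≤ EuclideanGeometry.angle (v i) P (v j) ∧ dist (v i) (v j) ≤ dist P (v j)}

/-- `(i,j)` is a feasible pair: the arc `⟨i..j⟩` has an even number of points. -/
def Feasible {n : ℕ} (i j : ZMod n) : Prop := Even (arc i j).card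

/-- `(i,j)` is a diagonal pair (not an edge, not degenerate). -/
def IsDiagPair {n : ℕ} (i j : ZMod n) : Prop := i ≠ j ∧ j ≠ i + 1 ∧ i ≠ j + 1

/-- `(i,j)` is a candidate diagonal: a feasible diagonal that is necessary and
whose turning angle is at most `2π/3`. -/
def Candidate {n : ℕ} (v : ZMod n → Pt) (i j : ZMod n) : Prop :=
  Feasible i j ∧ IsDiagPair i j ∧ Necessary v i j ∧ tau v i j ≤ 2 * Real.pi / 3

end BNC

/-!
Walk along the arc as a polygonal path with edge vectors `E r = v (i+r+1) - v (i+r)`. By the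
triangle inequality for unoriented angles, the angle between two edges is at most the sum of the
turning angles between them, hence at most `τ(i,j) ≤ π/2`, so any two edges have nonnegative inner
product. If `u` is the sum of a run of consecutive edges and `w` the sum of all of them, then
`‖u‖² = ⟪u, u⟫ ≤ ⟪w, u⟫ ≤ ‖w‖ ‖u‖`, i.e. `‖u‖ ≤ ‖w‖ = dist (v i) (v j)`.
-/

open Finset InnerProductGeometry RealInnerProductSpace

section TurningAngle

variable {V : Type*} [NormedAddCommGroup V] [InnerProductSpace ℝ V]

theorem InnerProductGeometry.inner_nonneg_of_angle_le_pi_div_two {x y : V}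
    (h : angle x y ≤ Real.pi / 2) : 0 ≤ ⟪x, y⟫ := by
  rw [← cos_angle_mul_norm_mul_norm]
  have hcos : 0 ≤ Real.cos (angle x y) :=
    Real.cos_nonneg_of_mem_Icc ⟨by linarith [angle_nonneg x y, Real.pi_pos], h⟩
  positivity

/-- Only for `t < s`: for `t = s` the left side is `angle (E t) (E t)`, which is `π / 2`
when `E t = 0`. -/
theorem angle_le_sum_angle_succ (E : ℕ → V) {t s : ℕ} (hts : t < s) :
    angle (E s) (E t) ≤ ∑ r ∈ Ico t s, angle (E (r + 1)) (E r) := by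
  induction s, hts using Nat.le_induction with
  | base => simp
  | succ s hts ih =>
    rw [sum_Ico_succ_top (by omega)]
    linarith [angle_le_angle_add_angle (E (s + 1)) (E s) (E t)]

theorem inner_nonneg_of_sum_angle_le_pi_div_two {E : ℕ → V} {m : ℕ}
    (h : ∑ r ∈ range m, angle (E (r + 1)) (E r) ≤ Real.pi / 2) {t s : ℕ}
    (ht : t ≤ m) (hs : s ≤ m) : 0 ≤ ⟪E t, E s⟫ := by
  wlog hts : t ≤ s generalizing t s
  · rw [real_inner_comm]; exact this hs ht (by omega)
  rcases hts.eq_or_lt with rfl | hts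
  · exact real_inner_self_nonneg
  rw [real_inner_comm]
  refine inner_nonneg_of_angle_le_pi_div_two ((angle_le_sum_angle_succ E hts).trans ?_)
  refine le_trans (sum_le_sum_of_subset_of_nonneg ?_ fun r _ _ => angle_nonneg _ _) h
  intro r hr
  simp only [mem_Ico, mem_range] at hr ⊢
  omega

theorem norm_sum_Ico_le_norm_sum_range {E : ℕ → V} {d : ℕ}
    (hE : ∀ t < d, ∀ s < d, 0 ≤ ⟪E t, E s⟫) {p q : ℕ} (hq : q ≤ d) :
    ‖∑ r ∈ Ico p q, E r‖ ≤ ‖∑ r ∈ range d, E r‖ := by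
  set u := ∑ r ∈ Ico p q, E r
  set w := ∑ r ∈ range d, E r
  have hsq : ‖u‖ * ‖u‖ ≤ ‖w‖ * ‖u‖ :=
    calc ‖u‖ * ‖u‖ = ∑ r ∈ Ico p q, ⟪E r, u⟫ := by
          rw [← real_inner_self_eq_norm_mul_norm, sum_inner]
      _ ≤ ∑ r ∈ range d, ⟪E r, u⟫ := by
          refine sum_le_sum_of_subset_of_nonneg (fun r hr => ?_) fun r hr _ => ?_
          · simp only [mem_Ico, mem_range] at hr ⊢; omega
          · rw [inner_sum]
            refine sum_nonneg fun s hs => hE r (mem_range.mp hr) s ?_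
            simp only [mem_Ico] at hs; omega
      _ = ⟪w, u⟫ := (sum_inner _ _ _).symm
      _ ≤ ‖w‖ * ‖u‖ := real_inner_le_norm w u
  rcases (norm_nonneg u).eq_or_lt with hu | hu
  · rw [← hu]; exact norm_nonneg w
  · exact le_of_mul_le_mul_right hsq hu

theorem dist_le_dist_of_sum_angle_le_pi_div_two {p : ℕ → V} {d : ℕ}
    (h : ∑ r ∈ range (d - 1), angle (p (r + 2) - p (r + 1)) (p (r + 1) - p r) ≤ Real.pi / 2)
    {a b : ℕ} (ha : a ≤ d) (hb : b ≤ d) : dist (p a) (p b) ≤ dist (p 0) (p d) := by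
  wlog hab : a ≤ b generalizing a b
  · rw [dist_comm]; exact this hb ha (by omega)
  have hE : ∀ t < d, ∀ s < d, 0 ≤ ⟪p (t + 1) - p t, p (s + 1) - p s⟫ := fun t ht s hs =>
    inner_nonneg_of_sum_angle_le_pi_div_two (E := fun r => p (r + 1) - p r) h (by omega)
      (by omega)
  have key := norm_sum_Ico_le_norm_sum_range hE hb (p := a)
  rwa [sum_Ico_sub _ hab, ← Nat.Ico_zero_eq_range, sum_Ico_sub _ (Nat.zero_le d),
    ← dist_eq_norm', ← dist_eq_norm'] at key

end TurningAngle

namespace BNC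

variable {n : ℕ} [NeZero n]

theorem add_natCast_val_sub (i j : ZMod n) : i + ((j - i).val : ZMod n) = j := by
  rw [ZMod.natCast_zmod_val]; ring

theorem tau_eq_sum_range (v : ZMod n → Pt) (i j : ZMod n) (hd : 2 ≤ (j - i).val) :
    tau v i j = ∑ r ∈ range ((j - i).val - 1),
      angle (v (i + ((r + 2 : ℕ) : ZMod n)) - v (i + ((r + 1 : ℕ) : ZMod n)))
        (v (i + ((r + 1 : ℕ) : ZMod n)) - v (i + (r : ZMod n))) := by
  set d := (j - i).val
  have hdn : d < n := ZMod.val_lt _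
  have hlen : (j - 1 - (i + 1)).val = d - 2 := by
    rw [show j - 1 - (i + 1) = ((d - 2 : ℕ) : ZMod n) by
      rw [Nat.cast_sub hd, ZMod.natCast_zmod_val]; push_cast; ring]
    exact ZMod.val_cast_of_lt (by omega)
  have hinj : Set.InjOn (fun t : ℕ => i + 1 + (t : ZMod n)) (range (d - 1) : Set ℕ) := by
    intro a ha b hb hab
    have := congrArg ZMod.val (add_left_cancel hab)
    simp only [coe_range, Set.mem_Iio] at ha hb
    rwa [ZMod.val_cast_of_lt (by omega), ZMod.val_cast_of_lt (by omega)] at this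
  rw [tau, arc, hlen, show d - 2 + 1 = d - 1 by omega, sum_image hinj]
  refine sum_congr rfl fun r _ => ?_
  congr 3 <;> push_cast <;> ring

end BNC

theorem stmt1_general (n : ℕ) [NeZero n]
    (v : ZMod n → BNC.Pt)
    (i j : ZMod n) (h : BNC.tau v i j ≤ Real.pi / 2) :
    ∀ k ∈ BNC.arc i j, ∀ l ∈ BNC.arc i j, dist (v k) (v l) ≤ dist (v i) (v j) := by
  have hsum : ∑ r ∈ range ((j - i).val - 1),
      angle (v (i + ((r + 2 : ℕ) : ZMod n)) - v (i + ((r + 1 : ℕ) : ZMod n)))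
        (v (i + ((r + 1 : ℕ) : ZMod n)) - v (i + (r : ZMod n))) ≤ Real.pi / 2 := by
    rcases lt_or_ge (j - i).val 2 with hd | hd
    -- here `⟨i+1..j-1⟩` wraps around the whole cycle, but the sum is empty
    · rw [Nat.sub_eq_zero_of_le (by omega), sum_range_zero]; positivity
    · rwa [← BNC.tau_eq_sum_range v i j hd]
  intro k hk l hl
  obtain ⟨a, ha, rfl⟩ := mem_image.mp hk
  obtain ⟨b, hb, rfl⟩ := mem_image.mp hl
  have key := dist_le_dist_of_sum_angle_le_pi_div_two (p := fun r : ℕ => v (i + r)) hsum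
    (Nat.lt_succ_iff.mp (mem_range.mp ha)) (Nat.lt_succ_iff.mp (mem_range.mp hb))
  rwa [Nat.cast_zero, add_zero, BNC.add_natCast_val_sub] at key

/-- If `τ(i,j) ≤ π/2` then the diameter of `{v i, …, v j}` is attained by the
pair `(v i, v j)`. -/
theorem stmt1 (n : ℕ) [NeZero n] (hn : 4 ≤ n) (hEven : Even n)
    (v : ZMod n → BNC.Pt) (hv : BNC.ConvexCCW v)
    (i j : ZMod n) (h : BNC.tau v i j ≤ Real.pi / 2) :
    ∀ k ∈ BNC.arc i j, ∀ l ∈ BNC.arc i j, dist (v k) (v l) ≤ dist (v i) (v j) :=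
  stmt1_general n v i j h
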